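/- Let 0 < α < 10⁻⁶ and let n, d ∈ ℕ with n/150 ≤ d ≤ n/3. Let V, W be a partition of an n-element vertex set with |W| = d, and suppose H is a 3-uniform hypergraph on V ∪ W such that every vertex of H is α-good with respect to H_{n,d}(V,W). Then H contains a matching of size d. -/

import Mathlib

/-!
Only edges of type `VVW` are used. Call a pair `p ⊆ V` light if at most `d/4` vertices
`w ∈ W` have `{w} ∪ p ∉ H`. We choose `d` disjoint light pairs `C` such that every `w ∈ W`
fails on fewer than `3d/4` of them; then Hall's condition holds for the bipartite graph
between `W` and `C` (a set of at most `d/4` vertices is served by any one of them, a larger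
set sees every pair), and its perfect matching is a matching of `H`.

Goodness bounds the number of heavy pairs at each vertex by `Δ ≈ 4αn²/d`, so disjoint light
pairs can be found greedily, repairing a stuck greedy step by a swap. If `αn² < 3d/4` every
`w` fails on fewer than `3d/4` pairs altogether. Otherwise the pairs are chosen one at a time
keeping the potential `∑_w 2 ^ #{p ∈ C | {w} ∪ p ∉ H}` small: by averaging it grows by a factor
`1 + O(αn²/f²)` while `f` vertices are left, so stopping at `f ≈ 3√(αn²)` bounds each count
by `log₂ d + O(√α n)`, and the last `O(√α n)` pairs are added arbitrarily.
-/

open Finset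

namespace HypergraphMatching

section PairMatching

variable {α : Type*}

def IsPairMatching (Good : Finset α → Prop) (R : Finset α) (M : Finset (Finset α)) : Prop :=
  (∀ p ∈ M, p ⊆ R ∧ #p = 2 ∧ Good p) ∧ (M : Set (Finset α)).PairwiseDisjoint id

variable {Good : Finset α → Prop} {R : Finset α} {M : Finset (Finset α)}

namespace IsPairMatching

lemma empty : IsPairMatching Good R ∅ := ⟨by simp, by simp⟩

lemma subset {N : Finset (Finset α)} (hM : IsPairMatching Good R M) (hN : N ⊆ M) :
    IsPairMatching Good R N :=
  ⟨fun p hp => hM.1 p (hN hp), hM.2.subset (by simpa using hN)⟩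

lemma mono {R' : Finset α} (hM : IsPairMatching Good R M) (hR : R ⊆ R') :
    IsPairMatching Good R' M :=
  ⟨fun p hp => ⟨(hM.1 p hp).1.trans hR, (hM.1 p hp).2⟩, hM.2⟩

lemma disjoint (hM : IsPairMatching Good R M) {p q : Finset α} (hp : p ∈ M) (hq : q ∈ M)
    (hpq : p ≠ q) : Disjoint p q :=
  hM.2 hp hq hpq

end IsPairMatching

variable [DecidableEq α]

def badDegree (Good : Finset α → Prop) [DecidablePred Good] (F : Finset α) (x : α) : ℕ :=
  #{y ∈ F | y ≠ x ∧ ¬ Good {x, y}}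

lemma badDegree_mono [DecidablePred Good] {F F' : Finset α} (h : F' ⊆ F) (x : α) :
    badDegree Good F' x ≤ badDegree Good F x :=
  card_le_card (filter_subset_filter _ h)

lemma card_le_add_card_filter_good [DecidablePred Good] {z : α} {Δ : ℕ}
    (hz : badDegree Good R z ≤ Δ) :
    #R ≤ Δ + 1 + #{w ∈ R | w ≠ z ∧ Good {z, w}} := by
  have hsub : {w ∈ R | ¬ (w ≠ z ∧ Good {z, w})} ⊆
      insert z {w ∈ R | w ≠ z ∧ ¬ Good {z, w}} := by
    intro w
    simp only [mem_filter, mem_insert]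
    tauto
  have := card_filter_add_card_filter_not (s := R) (fun w => w ≠ z ∧ Good {z, w})
  have := (card_le_card hsub).trans (card_insert_le _ _)
  rw [badDegree] at hz
  omega

lemma exists_mem_mem_of_two_lt_card_inter_add {e P Q : Finset α} (he : #e = 2)
    (h : 2 < #(e ∩ P) + #(e ∩ Q)) : ∃ a ∈ e, ∃ b ∈ e, a ≠ b ∧ a ∈ P ∧ b ∈ Q := by
  have hP := card_le_card (inter_subset_left : e ∩ P ⊆ e)
  have hQ := card_le_card (inter_subset_left : e ∩ Q ⊆ e)
  by_cases hcase : #(e ∩ P) = 2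
  · have heP : e ⊆ P := inter_eq_left.1 (eq_of_subset_of_card_le inter_subset_left (by omega))
    obtain ⟨b, hb⟩ : (e ∩ Q).Nonempty := card_pos.1 (by omega)
    obtain ⟨a, ha, hab⟩ := exists_mem_ne (by omega : 1 < #e) b
    exact ⟨a, ha, b, (mem_inter.1 hb).1, hab, heP ha, (mem_inter.1 hb).2⟩
  · have heQ : e ⊆ Q := inter_eq_left.1 (eq_of_subset_of_card_le inter_subset_left (by omega))
    obtain ⟨a, ha⟩ : (e ∩ P).Nonempty := card_pos.1 (by omega)
    obtain ⟨b, hb, hba⟩ := exists_mem_ne (by omega : 1 < #e) a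
    exact ⟨a, (mem_inter.1 ha).1, b, hb, hba.symm, (mem_inter.1 ha).2, heQ hb⟩

namespace IsPairMatching

lemma insert (hM : IsPairMatching Good R M) {p : Finset α} (hpR : p ⊆ R) (hp : #p = 2)
    (hgood : Good p) (hdisj : ∀ q ∈ M, Disjoint p q) :
    IsPairMatching Good R (insert p M) ∧ #(insert p M) = #M + 1 := by
  have hpM : p ∉ M := fun hpM =>
    (card_pos.1 (by omega)).ne_empty (disjoint_self.1 (hdisj p hpM))
  refine ⟨⟨?_, ?_⟩, card_insert_of_notMem hpM⟩
  · intro q hq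
    rcases mem_insert.1 hq with rfl | hq
    exacts [⟨hpR, hp, hgood⟩, hM.1 q hq]
  · rw [coe_insert]
    exact hM.2.insert fun q hq _ => hdisj q hq

lemma card_biUnion (hM : IsPairMatching Good R M) : #(M.biUnion id) = 2 * #M := by
  rw [Finset.card_biUnion hM.2]
  calc ∑ p ∈ M, #(id p) = ∑ _p ∈ M, 2 := sum_congr rfl fun p hp => (hM.1 p hp).2.1
    _ = 2 * #M := by rw [sum_const, smul_eq_mul, mul_comm]

lemma biUnion_subset (hM : IsPairMatching Good R M) : M.biUnion id ⊆ R :=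
  Finset.biUnion_subset.2 fun p hp => (hM.1 p hp).1

lemma union_of_sdiff {M' : Finset (Finset α)} (hM : IsPairMatching Good R M)
    (hM' : IsPairMatching Good (R \ M.biUnion id) M') :
    IsPairMatching Good R (M ∪ M') ∧ #(M ∪ M') = #M + #M' := by
  have hdisj : ∀ p ∈ M, ∀ q ∈ M', Disjoint p q := fun p hp q hq =>
    (disjoint_sdiff.mono_left (subset_biUnion_of_mem id hp)).mono_right (hM'.1 q hq).1
  refine ⟨⟨?_, ?_⟩, card_union_of_disjoint ?_⟩
  · intro p hp
    rcases mem_union.1 hp with hp | hp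
    exacts [hM.1 p hp, (hM'.mono sdiff_subset).1 p hp]
  · rw [coe_union]
    exact hM.2.union hM'.2 fun p hp q hq _ => hdisj p hp q hq
  · refine disjoint_left.2 fun p hp hp' => ?_
    have : p.Nonempty := card_pos.1 (by rw [(hM.1 p hp).2.1]; omega)
    exact this.ne_empty (disjoint_self.1 (hdisj p hp p hp'))

lemma sum_card_inter (hM : IsPairMatching Good R M) {P : Finset α} (hP : P ⊆ M.biUnion id) :
    ∑ e ∈ M, #(e ∩ P) = #P := by
  rw [← Finset.card_biUnion (t := (· ∩ P)) (hM.2.mono fun _ => inter_subset_left)]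
  congr 1
  ext z
  simp only [mem_biUnion, mem_inter]
  exact ⟨fun ⟨_, _, _, hz⟩ => hz, fun hz =>
    let ⟨e, he, hze⟩ := mem_biUnion.1 (hP hz); ⟨e, he, hze, hz⟩⟩

lemma exists_mem_mem_of_lt (hM : IsPairMatching Good R M) {P Q : Finset α}
    (hP : P ⊆ M.biUnion id) (hQ : Q ⊆ M.biUnion id) (h : 2 * #M < #P + #Q) :
    ∃ e ∈ M, ∃ a ∈ e, ∃ b ∈ e, a ≠ b ∧ a ∈ P ∧ b ∈ Q := by
  have hsum : ∑ _e ∈ M, 2 < ∑ e ∈ M, (#(e ∩ P) + #(e ∩ Q)) := by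
    rw [sum_add_distrib, hM.sum_card_inter hP, hM.sum_card_inter hQ, sum_const, smul_eq_mul]
    omega
  obtain ⟨e, he, hlt⟩ := exists_lt_of_sum_lt hsum
  exact ⟨e, he, exists_mem_mem_of_two_lt_card_inter_add (hM.1 e he).2.1 hlt⟩

/-- Trading the edge `e = {a, b}` for `{x, a}` and `{y, b}` enlarges the matching. -/
lemma exists_card_eq_add_one_of_swap (hM : IsPairMatching Good R M) {e : Finset α}
    (he : e ∈ M) {a b x y : α} (ha : a ∈ e) (hb : b ∈ e) (hab : a ≠ b) (hx : x ∈ R)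
    (hy : y ∈ R) (hxy : x ≠ y) (hxM : x ∉ M.biUnion id) (hyM : y ∉ M.biUnion id)
    (hxa : Good {x, a}) (hyb : Good {y, b}) :
    ∃ M', IsPairMatching Good R M' ∧ #M' = #M + 1 := by
  have hcov : ∀ q ∈ M, ∀ z ∈ q, z ∈ M.biUnion id := fun q hq z hz =>
    mem_biUnion.2 ⟨q, hq, hz⟩
  have hfar : ∀ q ∈ M.erase e, x ∉ q ∧ y ∉ q ∧ a ∉ q ∧ b ∉ q := by
    intro q hq
    obtain ⟨hqe, hqM⟩ := mem_erase.1 hq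
    have hqe' := hM.disjoint hqM he hqe
    exact ⟨fun h => hxM (hcov q hqM x h), fun h => hyM (hcov q hqM y h),
      disjoint_right.1 hqe' ha, disjoint_right.1 hqe' hb⟩
  have hxa' : x ≠ a := fun h => hxM (h ▸ hcov e he a ha)
  have hxb : x ≠ b := fun h => hxM (h ▸ hcov e he b hb)
  have hya : y ≠ a := fun h => hyM (h ▸ hcov e he a ha)
  have hyb' : y ≠ b := fun h => hyM (h ▸ hcov e he b hb)
  have heR := (hM.1 e he).1
  obtain ⟨hM₁, hcard₁⟩ := (hM.subset (erase_subset e M)).insert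
    (insert_subset hy (singleton_subset_iff.2 (heR hb))) (card_pair hyb') hyb
    fun q hq => by simp [disjoint_insert_left, (hfar q hq).2.1, (hfar q hq).2.2.2]
  obtain ⟨hM₂, hcard₂⟩ := hM₁.insert
    (insert_subset hx (singleton_subset_iff.2 (heR ha))) (card_pair hxa') hxa fun q hq => by
      rcases mem_insert.1 hq with rfl | hq
      · simp [hxy.symm, hxb.symm, hya, hab.symm]
      · simp [disjoint_insert_left, (hfar q hq).1, (hfar q hq).2.2.1]
  refine ⟨_, hM₂, ?_⟩
  rw [hcard₂, hcard₁, card_erase_of_mem he]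
  have := card_pos.2 ⟨e, he⟩
  omega

variable [DecidablePred Good] {Δ : ℕ}

lemma exists_card_eq_add_one (hM : IsPairMatching Good R M)
    (hdeg : ∀ x ∈ R, badDegree Good R x ≤ Δ) (hΔ : 2 * Δ < #R)
    (hMR : 2 * #M + 2 ≤ #R) : ∃ M', IsPairMatching Good R M' ∧ #M' = #M + 1 := by
  set U := R \ M.biUnion id
  have hU : 2 ≤ #U := by
    rw [card_sdiff_of_subset hM.biUnion_subset, hM.card_biUnion]
    omega
  by_cases hfree : ∃ x ∈ U, ∃ y ∈ U, x ≠ y ∧ Good {x, y}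
  · obtain ⟨x, hx, y, hy, hxy, hgood⟩ := hfree
    rw [mem_sdiff, mem_biUnion, not_exists] at hx hy
    refine ⟨_, hM.insert (insert_subset hx.1 (singleton_subset_iff.2 hy.1)) (card_pair hxy)
      hgood fun q hq => ?_⟩
    simpa [disjoint_insert_left] using ⟨fun h => hx.2 q ⟨hq, h⟩, fun h => hy.2 q ⟨hq, h⟩⟩
  · push Not at hfree
    obtain ⟨x, hx, y, hy, hxy⟩ := one_lt_card.1 hU
    have hnbr : ∀ z ∈ U, {w ∈ R | w ≠ z ∧ Good {z, w}} ⊆ M.biUnion id := by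
      intro z hz w hw
      obtain ⟨hwR, hwz, hgood⟩ := mem_filter.1 hw
      by_contra hwM
      exact hfree z hz w (mem_sdiff.2 ⟨hwR, hwM⟩) hwz.symm hgood
    have hxR := (mem_sdiff.1 hx).1
    have hyR := (mem_sdiff.1 hy).1
    obtain ⟨e, he, a, ha, b, hb, hab, hxa, hyb⟩ :=
      hM.exists_mem_mem_of_lt (hnbr x hx) (hnbr y hy) <| by
        have := card_le_add_card_filter_good (hdeg x hxR)
        have := card_le_add_card_filter_good (hdeg y hyR)
        omega
    exact hM.exists_card_eq_add_one_of_swap he ha hb hab hxR hyR hxy (mem_sdiff.1 hx).2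
      (mem_sdiff.1 hy).2 (mem_filter.1 hxa).2.2 (mem_filter.1 hyb).2.2

end IsPairMatching

theorem exists_isPairMatching_card_eq [DecidablePred Good] {Δ : ℕ}
    (hdeg : ∀ x ∈ R, badDegree Good R x ≤ Δ) (hΔ : 2 * Δ < #R) :
    ∀ u, 2 * u ≤ #R → ∃ M, IsPairMatching Good R M ∧ #M = u
  | 0, _ => ⟨∅, .empty, card_empty⟩
  | u + 1, hu => by
    obtain ⟨M, hM, rfl⟩ := exists_isPairMatching_card_eq hdeg hΔ u (by omega)
    exact hM.exists_card_eq_add_one hdeg hΔ (by omega)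

end PairMatching

section Potential

variable {α β : Type*} [DecidableEq α] (W : Finset β) (Forb : β → Finset (Finset α))

noncomputable def potential (C : Finset (Finset α)) : ℝ :=
  ∑ w ∈ W, (2 : ℝ) ^ #(C ∩ Forb w)

lemma potential_empty : potential W Forb ∅ = #W := by
  simp [potential]

lemma potential_nonneg (C : Finset (Finset α)) : 0 ≤ potential W Forb C :=
  sum_nonneg fun _ _ => by positivity

lemma two_pow_le_potential (C : Finset (Finset α)) {w : β} (hw : w ∈ W) :
    (2 : ℝ) ^ #(C ∩ Forb w) ≤ potential W Forb C :=
  single_le_sum (f := fun w => (2 : ℝ) ^ #(C ∩ Forb w)) (fun _ _ => by positivity) hw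

lemma potential_insert_le (C : Finset (Finset α)) (p : Finset α) :
    potential W Forb (insert p C) ≤
      potential W Forb C + ∑ w ∈ W, if p ∈ Forb w then (2 : ℝ) ^ #(C ∩ Forb w) else 0 := by
  rw [potential, potential, ← sum_add_distrib]
  refine sum_le_sum fun w _ => ?_
  split_ifs with hp
  · rw [insert_inter_of_mem hp, ← two_mul, ← pow_succ']
    exact pow_le_pow_right₀ one_le_two (card_insert_le _ _)
  · rw [insert_inter_of_notMem hp, add_zero]

lemma exists_potential_insert_le {S : Finset (Finset α)} (hS : S.Nonempty) {A : ℝ}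
    (hA : ∀ w ∈ W, (#(S ∩ Forb w) : ℝ) ≤ A) (C : Finset (Finset α)) :
    ∃ p ∈ S, potential W Forb (insert p C) ≤ potential W Forb C * (1 + A / #S) := by
  have hsum : ∑ p ∈ S, (∑ w ∈ W, if p ∈ Forb w then (2 : ℝ) ^ #(C ∩ Forb w) else 0) ≤
      ∑ _p ∈ S, potential W Forb C * A / #S := by
    rw [sum_const, nsmul_eq_mul, mul_div_cancel₀ _ (Nat.cast_ne_zero.2 hS.card_pos.ne'),
      sum_comm, potential, sum_mul]
    refine sum_le_sum fun w hw => ?_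
    rw [← sum_filter, sum_const, nsmul_eq_mul, filter_mem_eq_inter, mul_comm]
    exact mul_le_mul_of_nonneg_left (hA w hw) (by positivity)
  obtain ⟨p, hp, hle⟩ := exists_le_of_sum_le hS hsum
  refine ⟨p, hp, (potential_insert_le W Forb C p).trans ?_⟩
  rw [mul_add, mul_one, ← mul_div_assoc]
  exact add_le_add_right hle _

variable {Good : Finset α → Prop} [DecidablePred Good] {Δ : ℕ}

lemma card_filter_not_good_le {F : Finset α} (hdeg : ∀ x ∈ F, badDegree Good F x ≤ Δ) :
    #{p ∈ F.powersetCard 2 | ¬ Good p} ≤ #F * Δ := by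
  have hsurj : Set.SurjOn (fun q : (_ : α) × α => ({q.1, q.2} : Finset α))
      (F.sigma fun x => {y ∈ F | y ≠ x ∧ ¬ Good {x, y}})
      ({p ∈ F.powersetCard 2 | ¬ Good p} : Finset (Finset α)) := by
    intro p hp
    obtain ⟨hpF, hp2⟩ := mem_powersetCard.1 (mem_filter.1 hp).1
    obtain ⟨x, y, hxy, rfl⟩ := card_eq_two.1 hp2
    refine ⟨⟨x, y⟩, ?_, rfl⟩
    simp only [coe_sigma, Set.mem_sigma_iff, mem_coe, mem_filter]
    exact ⟨hpF (by simp), hpF (by simp), hxy.symm, (mem_filter.1 hp).2⟩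
  calc #{p ∈ F.powersetCard 2 | ¬ Good p}
      ≤ #(F.sigma fun x => {y ∈ F | y ≠ x ∧ ¬ Good {x, y}}) := card_le_card_of_surjOn _ hsurj
    _ ≤ ∑ _x ∈ F, Δ := by rw [card_sigma]; exact sum_le_sum hdeg
    _ = #F * Δ := by rw [sum_const, smul_eq_mul]

lemma cast_card_filter_good_ge {F : Finset α} (hdeg : ∀ x ∈ F, badDegree Good F x ≤ Δ)
    (hF : 4 * Δ + 1 ≤ #F) :
    (#F : ℝ) * (#F - 1) / 4 ≤ #{p ∈ F.powersetCard 2 | Good p} := by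
  have hsplit := card_filter_add_card_filter_not (s := F.powersetCard 2) Good
  rw [card_powersetCard] at hsplit
  have hsplit' : (#F : ℝ) * (#F - 1) / 2 =
      #{p ∈ F.powersetCard 2 | Good p} + #{p ∈ F.powersetCard 2 | ¬ Good p} := by
    rw [← Nat.cast_choose_two, ← hsplit, Nat.cast_add]
  have hbad : (#{p ∈ F.powersetCard 2 | ¬ Good p} : ℝ) ≤ #F * Δ := by
    exact_mod_cast card_filter_not_good_le hdeg
  have hF' : (4 * Δ + 1 : ℝ) ≤ #F := by exact_mod_cast hF
  nlinarith [mul_nonneg (Nat.cast_nonneg (α := ℝ) #F) (sub_nonneg.2 hF')]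

lemma one_add_div_le_exp_sub {A f : ℝ} (hA : 0 ≤ A) (hf : 2 < f) :
    1 + 4 * A / (f * (f - 1)) ≤ Real.exp (2 * A / (f - 2) - 2 * A / f) := by
  have htel : 2 * A / (f - 2) - 2 * A / f = 4 * A / (f * (f - 2)) := by
    field_simp [(by linarith : f - 2 ≠ 0)]
    ring
  calc 1 + 4 * A / (f * (f - 1)) ≤ 1 + 4 * A / (f * (f - 2)) := by
        gcongr
        nlinarith
    _ ≤ _ := by rw [← htel]; linarith [Real.add_one_le_exp (2 * A / (f - 2) - 2 * A / f)]

/-- Each greedy pair costs at most the factor `1 + 4A / (f (f - 1))` while `f` vertices are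
left, and these factors telescope. -/
theorem exists_isPairMatching_potential_le {A : ℝ} (hA : 0 ≤ A)
    (hForb : ∀ w ∈ W, (#(Forb w) : ℝ) ≤ A) :
    ∀ (k : ℕ) (F : Finset α), (∀ x ∈ F, badDegree Good F x ≤ Δ) → 4 * Δ + 1 + 2 * k ≤ #F →
      ∀ C, ∃ D, IsPairMatching Good F D ∧ #D = k ∧
        potential W Forb (C ∪ D) ≤
          potential W Forb C * Real.exp (2 * A / (#F - 2 * k) - 2 * A / #F)
  | 0, F, _, _, C => ⟨∅, .empty, rfl, by simp⟩
  | k + 1, F, hdeg, hF, C => by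
    set S := {p ∈ F.powersetCard 2 | Good p}
    have hf : (4 * Δ + 3 + 2 * k : ℝ) ≤ #F := by
      exact_mod_cast (by omega : 4 * Δ + 3 + 2 * k ≤ #F)
    have hS := cast_card_filter_good_ge hdeg (by omega)
    have hSpos : (0 : ℝ) < #S := by nlinarith
    obtain ⟨p, hpS, hp⟩ := exists_potential_insert_le W Forb
      (card_pos.1 (by exact_mod_cast hSpos))
      (fun w hw => (Nat.cast_le.2 (card_le_card inter_subset_right)).trans (hForb w hw)) C
    obtain ⟨hpF, hp2⟩ := mem_powersetCard.1 (mem_filter.1 hpS).1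
    obtain ⟨D, hD, hDcard, hDpot⟩ := exists_isPairMatching_potential_le hA hForb k (F \ p)
      (fun x hx => (badDegree_mono sdiff_subset x).trans (hdeg x (mem_sdiff.1 hx).1))
      (by rw [card_sdiff_of_subset hpF, hp2]; omega) (insert p C)
    obtain ⟨hpD, hpDcard⟩ := (hD.mono sdiff_subset).insert hpF hp2 (mem_filter.1 hpS).2
      fun q hq => disjoint_sdiff.mono_right (hD.1 q hq).1
    refine ⟨insert p D, hpD, by rw [hpDcard, hDcard], ?_⟩
    have hFp : (#(F \ p) : ℝ) = #F - 2 := by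
      rw [card_sdiff_of_subset hpF, hp2, Nat.cast_sub (by omega)]
      norm_num
    rw [hFp] at hDpot
    have hstep : A / #S ≤ 4 * A / (#F * (#F - 1)) := by
      rw [show 4 * A / (#F * (#F - 1)) = A / (#F * (#F - 1) / 4) by
        rw [div_div_eq_mul_div]; ring]
      exact div_le_div_of_nonneg_left hA (by nlinarith) hS
    calc potential W Forb (C ∪ insert p D) = potential W Forb (insert p C ∪ D) := by
          rw [union_insert, insert_union]
      _ ≤ potential W Forb (insert p C) *
            Real.exp (2 * A / (#F - 2 - 2 * k) - 2 * A / (#F - 2)) := hDpot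
      _ ≤ potential W Forb C * Real.exp (2 * A / (#F - 2) - 2 * A / #F) *
            Real.exp (2 * A / (#F - 2 - 2 * k) - 2 * A / (#F - 2)) := by
          gcongr
          refine hp.trans (mul_le_mul_of_nonneg_left ?_ (potential_nonneg W Forb C))
          exact (add_le_add_right hstep 1).trans
            (one_add_div_le_exp_sub (f := #F) hA (by linarith))
      _ = potential W Forb C * Real.exp (2 * A / (#F - 2 * ↑(k + 1)) - 2 * A / #F) := by
          rw [mul_assoc, ← Real.exp_add]
          congr 2
          push_cast
          ring_nf

end Potential

lemma four_mul_add_lt_three_mul {c u : ℕ} {d X : ℝ} (hd : 34 ≤ d) (hX : X ≤ 3 * d / 20)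
    (hc : (2 : ℝ) ^ c ≤ d * Real.exp (2 * X / 3)) (hu : 2 * (u : ℝ) ≤ 3 * X + 4) :
    4 * ((c : ℝ) + u) < 3 * d := by
  have hlog : c * Real.log 2 ≤ Real.log d + 2 * X / 3 := by
    have := Real.log_le_log (by positivity) hc
    rwa [Real.log_pow, Real.log_mul (by positivity) (Real.exp_pos _).ne', Real.log_exp] at this
  have hlogd : Real.log d ≤ d / 64 - 1 + 6 * Real.log 2 := by
    have h := Real.log_le_sub_one_of_pos (x := d / 64) (by positivity)
    rw [Real.log_div (by positivity) (by norm_num), show (64 : ℝ) = 2 ^ 6 by norm_num,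
      Real.log_pow] at h
    push_cast at h
    linarith
  have hlog2 := Real.log_two_gt_d9
  have hlog2' := Real.log_two_lt_d9
  nlinarith [mul_le_mul_of_nonneg_left hlog2.le (Nat.cast_nonneg (α := ℝ) c)]

section Selection

variable {α β : Type*} [DecidableEq α] {V : Finset α} {W : Finset β}
  {Forb : β → Finset (Finset α)} {Good : Finset α → Prop} [DecidablePred Good] {d Δ : ℕ} {A : ℝ}

lemma exists_isPairMatching_of_four_mul_lt (hV : 2 * d ≤ #V)
    (hdeg : ∀ x ∈ V, badDegree Good V x ≤ Δ) (hΔ : Δ < d)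
    (hForb : ∀ w ∈ W, (#(Forb w) : ℝ) ≤ A) (hA : 4 * A < 3 * d) :
    ∃ C, IsPairMatching Good V C ∧ #C = d ∧ ∀ w ∈ W, 4 * #(C ∩ Forb w) < 3 * d := by
  obtain ⟨C, hC, hCcard⟩ := exists_isPairMatching_card_eq hdeg (by omega) d hV
  refine ⟨C, hC, hCcard, fun w hw => ?_⟩
  have : (#(C ∩ Forb w) : ℝ) ≤ A :=
    (Nat.cast_le.2 (card_le_card inter_subset_right)).trans (hForb w hw)
  exact_mod_cast (by linarith : (4 * #(C ∩ Forb w) : ℝ) < 3 * d)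

/-- Greedy choice under the potential while at least `f₀` vertices are left; the last `u` pairs
are arbitrary. -/
lemma exists_isPairMatching_two_pow_le (hV : 2 * d ≤ #V)
    (hdeg : ∀ x ∈ V, badDegree Good V x ≤ Δ) (hForb : ∀ w ∈ W, (#(Forb w) : ℝ) ≤ A)
    (hA : 0 ≤ A) {f₀ : ℕ} (hΔf₀ : 4 * Δ + 1 ≤ f₀) (hf₀V : f₀ ≤ #V) :
    ∃ C u, IsPairMatching Good V C ∧ #C = d ∧ 2 * u ≤ f₀ + 1 ∧
      ∀ w ∈ W, ∃ c, #(C ∩ Forb w) ≤ c + u ∧ (2 : ℝ) ^ c ≤ #W * Real.exp (2 * A / f₀) := by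
  set k := min d ((#V - f₀) / 2)
  obtain ⟨D₁, hD₁, hD₁card, hpot⟩ :=
    exists_isPairMatching_potential_le W Forb hA hForb k V hdeg (by omega) ∅
  set R := V \ D₁.biUnion id
  have hR : #R = #V - 2 * k := by
    rw [card_sdiff_of_subset hD₁.biUnion_subset, hD₁.card_biUnion, hD₁card]
  obtain ⟨D₂, hD₂, hD₂card⟩ := exists_isPairMatching_card_eq (R := R)
    (fun x hx => (badDegree_mono sdiff_subset x).trans (hdeg x (mem_sdiff.1 hx).1))
    (by omega) (d - k) (by omega)
  obtain ⟨hD, hDcard⟩ := hD₁.union_of_sdiff hD₂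
  refine ⟨D₁ ∪ D₂, d - k, hD, by omega, by omega, fun w hw => ⟨#(D₁ ∩ Forb w), ?_, ?_⟩⟩
  · rw [union_inter_distrib_right]
    exact (card_union_le _ _).trans
      (add_le_add_right ((card_le_card inter_subset_left).trans hD₂card.le) _)
  have hf₀ : (0 : ℝ) < f₀ := by exact_mod_cast (by omega : 0 < f₀)
  have hRf₀ : (f₀ : ℝ) ≤ #V - 2 * k := by
    have : (f₀ : ℝ) ≤ #R := by exact_mod_cast (by omega : f₀ ≤ #R)
    rwa [hR, Nat.cast_sub (by omega), Nat.cast_mul, Nat.cast_two] at this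
  calc (2 : ℝ) ^ #(D₁ ∩ Forb w) ≤ potential W Forb D₁ := two_pow_le_potential W Forb D₁ hw
    _ ≤ #W * Real.exp (2 * A / (#V - 2 * k) - 2 * A / #V) := by
        rwa [empty_union, potential_empty] at hpot
    _ ≤ #W * Real.exp (2 * A / f₀) := by
        have : 0 ≤ 2 * A / #V := by positivity
        have : 2 * A / (#V - 2 * k) ≤ 2 * A / f₀ :=
          div_le_div_of_nonneg_left (by positivity) hf₀ hRf₀
        gcongr
        linarith

/-- Stopping the greedy phase at `f₀ ≈ 3√A` vertices balances the growth `exp (2A/f₀)` of the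
potential against the `f₀/2` pairs chosen arbitrarily. -/
lemma exists_isPairMatching_of_three_mul_le (hd : 0 < d) (hV : 2 * d ≤ #V) (hW : #W ≤ d)
    (hdeg : ∀ x ∈ V, badDegree Good V x ≤ Δ) (hForb : ∀ w ∈ W, (#(Forb w) : ℝ) ≤ A)
    (hΔ : (Δ : ℝ) * (d + 1) ≤ 4 * A) (hAd : A ≤ 9 * d ^ 2 / 400) (hA : 3 * d ≤ 4 * A) :
    ∃ C, IsPairMatching Good V C ∧ #C = d ∧ ∀ w ∈ W, 4 * #(C ∩ Forb w) < 3 * d := by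
  have hdpos : (0 : ℝ) < d := by exact_mod_cast hd
  have hd34 : (34 : ℝ) ≤ d := by
    have : (33 : ℝ) < d := by nlinarith
    exact_mod_cast (by exact_mod_cast this : 33 < d)
  set X := √A
  have hXA : X ^ 2 = A := Real.sq_sqrt (by linarith)
  have hX : 0 < X := Real.sqrt_pos.2 (by linarith)
  have hXd : X ≤ 3 * d / 20 := by nlinarith
  set f₀ := ⌈3 * X⌉₊ + 2
  have hf₀ : 3 * X + 2 ≤ f₀ ∧ (f₀ : ℝ) ≤ 3 * X + 3 := by
    have := Nat.le_ceil (3 * X)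
    have := Nat.ceil_lt_add_one (by positivity : 0 ≤ 3 * X)
    constructor <;> push_cast [f₀] <;> linarith
  have hΔf₀ : 4 * Δ + 1 ≤ f₀ := by
    have : (Δ : ℝ) * d ≤ 3 * X / 5 * d := by nlinarith
    have : (4 * Δ + 1 : ℝ) ≤ f₀ := by nlinarith [le_of_mul_le_mul_right this hdpos]
    exact_mod_cast this
  have hf₀V : f₀ ≤ #V := by
    have : (2 * d : ℝ) ≤ #V := by exact_mod_cast hV
    exact_mod_cast (by linarith : (f₀ : ℝ) ≤ #V)
  obtain ⟨C, u, hC, hCcard, hu, hCW⟩ :=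
    exists_isPairMatching_two_pow_le hV hdeg hForb (by linarith) hΔf₀ hf₀V
  refine ⟨C, hC, hCcard, fun w hw => ?_⟩
  obtain ⟨c, hcu, hc⟩ := hCW w hw
  have hc' : (2 : ℝ) ^ c ≤ d * Real.exp (2 * X / 3) := by
    have : 2 * A / f₀ ≤ 2 * X / 3 := by
      rw [div_le_div_iff₀ (by linarith) (by norm_num), ← hXA]
      nlinarith
    exact hc.trans (by gcongr)
  have hu' : 2 * (u : ℝ) ≤ 3 * X + 4 := by
    have : (2 * u : ℝ) ≤ f₀ + 1 := by exact_mod_cast hu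
    linarith
  have := four_mul_add_lt_three_mul hd34 hXd hc' hu'
  have : (#(C ∩ Forb w) : ℝ) ≤ c + u := by exact_mod_cast hcu
  exact_mod_cast (by linarith : (4 * #(C ∩ Forb w) : ℝ) < 3 * d)

theorem exists_isPairMatching_four_mul_card_inter_lt (hd : 0 < d) (hV : 2 * d ≤ #V)
    (hW : #W ≤ d) (hdeg : ∀ x ∈ V, badDegree Good V x ≤ Δ)
    (hForb : ∀ w ∈ W, (#(Forb w) : ℝ) ≤ A) (hΔ : (Δ : ℝ) * (d + 1) ≤ 4 * A)
    (hAd : A ≤ 9 * d ^ 2 / 400) :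
    ∃ C, IsPairMatching Good V C ∧ #C = d ∧ ∀ w ∈ W, 4 * #(C ∩ Forb w) < 3 * d := by
  rcases lt_or_ge (4 * A) (3 * d) with hA | hA
  · have hdpos : (0 : ℝ) < d := by exact_mod_cast hd
    have : (Δ : ℝ) < d := by nlinarith
    exact exists_isPairMatching_of_four_mul_lt hV hdeg (by exact_mod_cast this) hForb hA
  · exact exists_isPairMatching_of_three_mul_le hd hV hW hdeg hForb hΔ hAd hA

end Selection

theorem exists_injective_of_card_filter_not_le {ι κ : Type*} [DecidableEq κ] (s : Finset ι)
    (t : Finset κ) (r : ι → κ → Prop) [DecidableRel r] (a : ℕ) (hst : #s ≤ #t)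
    (hs : ∀ i ∈ s, a < #{j ∈ t | r i j}) (ht : ∀ j ∈ t, #{i ∈ s | ¬ r i j} ≤ a) :
    ∃ f : s → κ, Function.Injective f ∧ ∀ i, f i ∈ t ∧ r i (f i) := by
  have hhall : ∀ u : Finset s, #u ≤ #(u.biUnion fun i => {j ∈ t | r i j}) := by
    intro u
    rcases u.eq_empty_or_nonempty with rfl | ⟨i₀, hi₀⟩
    · simp
    by_cases hu : #u ≤ a
    · exact (hu.trans (hs i₀ i₀.2).le).trans
        (card_le_card (subset_biUnion_of_mem (fun i : s => {j ∈ t | r i j}) hi₀))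
    -- a larger `u` sees every `j`, since at most `a` elements of `s` miss `j`
    have htu : t ⊆ u.biUnion fun i => {j ∈ t | r i j} := by
      intro j hj
      by_contra hj'
      have hsub : u.map (Function.Embedding.subtype _) ⊆ {i ∈ s | ¬ r i j} := by
        intro i hi
        obtain ⟨i, hiu, rfl⟩ := mem_map.1 hi
        exact mem_filter.2 ⟨i.2, fun hr => hj' (mem_biUnion.2 ⟨i, hiu, mem_filter.2 ⟨hj, hr⟩⟩)⟩
      exact hu ((card_map _ ▸ card_le_card hsub).trans (ht j hj))
    calc #u ≤ #s := (card_le_univ u).trans (Fintype.card_coe s).le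
      _ ≤ #t := hst
      _ ≤ _ := card_le_card htu
  obtain ⟨f, hf, hft⟩ := (all_card_le_biUnion_card_iff_exists_injective _).1 hhall
  exact ⟨f, hf, fun i => mem_filter.1 (hft i)⟩

section Hypergraph

variable {α : Type*} [DecidableEq α] {V W : Finset α} {H : Finset (Finset α)}

/-- Hall's theorem for the bipartite graph joining `w ∈ W` to `p ∈ C` when `insert w p ∈ H`. -/
theorem exists_matching_of_pairs (hVW : Disjoint V W) {C : Finset (Finset α)}
    (hCV : ∀ p ∈ C, p ⊆ V) (hC : (C : Set (Finset α)).PairwiseDisjoint id) (hWC : #W ≤ #C)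
    (a : ℕ) (hW : ∀ w ∈ W, a < #{p ∈ C | insert w p ∈ H})
    (hCW : ∀ p ∈ C, #{w ∈ W | insert w p ∉ H} ≤ a) :
    ∃ M ⊆ H, (M : Set (Finset α)).PairwiseDisjoint id ∧ #M = #W := by
  obtain ⟨f, hf, hfC⟩ :=
    exists_injective_of_card_filter_not_le W C (fun w p => insert w p ∈ H) a hWC hW hCW
  have hwf : ∀ w w' : W, w.1 ∉ f w' := fun w w' h =>
    disjoint_left.1 hVW (hCV _ (hfC w').1 h) w.2
  have hdisj : ∀ w w' : W, w ≠ w' → Disjoint (insert w.1 (f w)) (insert w'.1 (f w')) := by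
    intro w w' hne
    simp only [disjoint_insert_left, disjoint_insert_right, mem_insert, not_or]
    exact ⟨⟨Subtype.coe_ne_coe.2 hne.symm, hwf w' w⟩, hwf w w',
      hC (hfC w).1 (hfC w').1 (hf.ne hne)⟩
  refine ⟨univ.image fun w : W => insert w.1 (f w), image_subset_iff.2 fun w _ => (hfC w).2,
    ?_, ?_⟩
  · rintro _ he _ he' hne
    obtain ⟨w, -, rfl⟩ := mem_image.1 he
    obtain ⟨w', -, rfl⟩ := mem_image.1 he'
    exact hdisj w w' fun h => hne (h ▸ rfl)
  · rw [card_image_of_injective _ fun w w' h => by_contra fun hne =>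
      (insert_nonempty _ _).ne_empty (disjoint_self.1 (h ▸ hdisj w w' hne)), card_univ,
      Fintype.card_coe]

def forbiddenPairs (V : Finset α) (H : Finset (Finset α)) (w : α) : Finset (Finset α) :=
  {p ∈ V.powersetCard 2 | insert w p ∉ H}

lemma card_le_card_filter_add_card_inter_forbiddenPairs {C : Finset (Finset α)}
    (hC : ∀ p ∈ C, p ⊆ V ∧ #p = 2) (w : α) :
    #C ≤ #{p ∈ C | insert w p ∈ H} + #(C ∩ forbiddenPairs V H w) := by
  have hsub : {p ∈ C | insert w p ∉ H} ⊆ C ∩ forbiddenPairs V H w := fun p hp => by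
    obtain ⟨hpC, hpH⟩ := mem_filter.1 hp
    exact mem_inter.2 ⟨hpC, mem_filter.2 ⟨mem_powersetCard.2 (hC p hpC), hpH⟩⟩
  have := card_filter_add_card_filter_not (s := C) (fun p => insert w p ∈ H)
  have := card_le_card hsub
  omega

lemma insert_inter_eq_singleton (hVW : Disjoint V W) {p : Finset α} (hp : p ⊆ V) {w : α}
    (hw : w ∈ W) : insert w p ∩ W = {w} := by
  rw [insert_inter_of_mem hw, disjoint_iff_inter_eq_empty.1 (hVW.mono_left hp)]
  rfl

lemma eq_and_eq_of_insert_eq_insert (hVW : Disjoint V W) {p p' : Finset α} (hp : p ⊆ V)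
    (hp' : p' ⊆ V) {w w' : α} (hw : w ∈ W) (hw' : w' ∈ W) (h : insert w p = insert w' p') :
    w = w' ∧ p = p' := by
  obtain rfl : w = w' := singleton_injective <| by
    rw [← insert_inter_eq_singleton hVW hp hw, h, insert_inter_eq_singleton hVW hp' hw']
  refine ⟨rfl, ?_⟩
  rw [← erase_insert fun h => disjoint_left.1 hVW (hp h) hw, h,
    erase_insert fun h => disjoint_left.1 hVW (hp' h) hw]

variable [Fintype α]

/-- The edges of `H_{n,d}(V, W)` for `V = Wᶜ`. -/
def crossTriples (W : Finset α) : Finset (Finset α) :=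
  {e | #e = 3 ∧ (#(e ∩ W) = 1 ∨ #(e ∩ W) = 2)}

def missingAt (W : Finset α) (H : Finset (Finset α)) (v : α) : Finset (Finset α) :=
  {e ∈ crossTriples W \ H | v ∈ e}

lemma insert_mem_missingAt (hVW : Disjoint V W) {p : Finset α} (hp : p ⊆ V) (hp2 : #p = 2)
    {w : α} (hw : w ∈ W) (hH : insert w p ∉ H) {v : α} (hv : v ∈ insert w p) :
    insert w p ∈ missingAt W H v := by
  have hwp : w ∉ p := fun h => disjoint_left.1 hVW (hp h) hw
  simp [missingAt, crossTriples, card_insert_of_notMem hwp, hp2,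
    insert_inter_eq_singleton hVW hp hw, hH, hv]

lemma card_forbiddenPairs_le (hVW : Disjoint V W) {w : α} (hw : w ∈ W) :
    #(forbiddenPairs V H w) ≤ #(missingAt W H w) := by
  refine card_le_card_of_injOn (insert w) (fun p hp => ?_) fun p hp p' hp' h => ?_
  · obtain ⟨hpV, hp2⟩ := mem_powersetCard.1 (mem_filter.1 hp).1
    exact insert_mem_missingAt hVW hpV hp2 hw (mem_filter.1 hp).2 (mem_insert_self w p)
  · exact (eq_and_eq_of_insert_eq_insert hVW (mem_powersetCard.1 (mem_filter.1 hp).1).1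
      (mem_powersetCard.1 (mem_filter.1 hp').1).1 hw hw h).2

lemma badDegree_mul_le_card_missingAt (hVW : Disjoint V W) {x : α} (hx : x ∈ V) (a : ℕ) :
    badDegree (fun p => #{w ∈ W | insert w p ∉ H} ≤ a) V x * (a + 1) ≤
      #(missingAt W H x) := by
  set B := {y ∈ V | y ≠ x ∧ ¬ #{w ∈ W | insert w ({x, y} : Finset α) ∉ H} ≤ a}
  have hxV : ∀ y ∈ V, ({x, y} : Finset α) ⊆ V := fun y hy =>
    insert_subset hx (singleton_subset_iff.2 hy)
  have hinj : Set.InjOn (fun q : (_ : α) × α => insert q.2 ({x, q.1} : Finset α))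
      (B.sigma fun y => {w ∈ W | insert w ({x, y} : Finset α) ∉ H}) := by
    rintro ⟨y, w⟩ hq ⟨y', w'⟩ hq' h
    simp only [coe_sigma, Set.mem_sigma_iff, mem_coe, mem_filter, B] at hq hq'
    obtain ⟨rfl, hxy⟩ := eq_and_eq_of_insert_eq_insert hVW (hxV _ hq.1.1)
      (hxV _ hq'.1.1) hq.2.1 hq'.2.1 h
    have : y ∈ ({x, y'} : Finset α) := hxy ▸ mem_insert_of_mem (mem_singleton_self y)
    rw [mem_insert, mem_singleton, or_iff_right hq.1.2.1] at this
    rw [this]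
  calc badDegree (fun p => #{w ∈ W | insert w p ∉ H} ≤ a) V x * (a + 1)
      = ∑ _y ∈ B, (a + 1) := by rw [sum_const, smul_eq_mul]; rfl
    _ ≤ ∑ y ∈ B, #{w ∈ W | insert w {x, y} ∉ H} :=
        sum_le_sum fun y hy => not_le.1 (mem_filter.1 hy).2.2
    _ = #(B.sigma fun y => {w ∈ W | insert w ({x, y} : Finset α) ∉ H}) :=
        (card_sigma _ _).symm
    _ ≤ #(missingAt W H x) := by
        refine card_le_card_of_injOn (fun q : (_ : α) × α => insert q.2 ({x, q.1} : Finset α))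
          (fun q hq => ?_) hinj
        simp only [mem_coe, mem_sigma, mem_filter, B] at hq
        exact insert_mem_missingAt hVW (hxV _ hq.1.1) (card_pair hq.1.2.1.symm) hq.2.1
          hq.2.2 (by simp)

lemma badDegree_le_floor (hVW : Disjoint V W) {A : ℝ}
    (hA : ∀ v, (#(missingAt W H v) : ℝ) ≤ A) (a : ℕ) {x : α} (hx : x ∈ V) :
    badDegree (fun p => #{w ∈ W | insert w p ∉ H} ≤ a) V x ≤ ⌊A / (a + 1)⌋₊ := by
  refine Nat.le_floor ((le_div_iff₀ (by positivity)).2 (le_trans ?_ (hA x)))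
  exact_mod_cast badDegree_mul_le_card_missingAt hVW hx a

end Hypergraph

lemma floor_div_mul_le {A : ℝ} (hA : 0 ≤ A) (d : ℕ) :
    (⌊A / ((d / 4 : ℕ) + 1)⌋₊ : ℝ) * (d + 1) ≤ 4 * A := by
  have hd : (d + 1 : ℝ) ≤ 4 * ((d / 4 : ℕ) + 1) := by
    exact_mod_cast (by omega : d + 1 ≤ 4 * (d / 4 + 1))
  have hfl := Nat.floor_le (div_nonneg hA (by positivity : (0 : ℝ) ≤ (d / 4 : ℕ) + 1))
  rw [le_div_iff₀ (by positivity)] at hfl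
  nlinarith [Nat.cast_nonneg (α := ℝ) ⌊A / ((d / 4 : ℕ) + 1)⌋₊]

end HypergraphMatching

open HypergraphMatching

theorem stmt_10 (α : ℝ) (hα0 : 0 < α) (hα1 : α < 1/1000000)
    (n d : ℕ) (Vt : Type) [Fintype Vt] [DecidableEq Vt]
    (hcard : Fintype.card Vt = n)
    (hd1 : (n : ℝ)/150 ≤ (d : ℝ)) (hd2 : (d : ℝ) ≤ (n : ℝ)/3)
    (V W : Finset Vt) (hdisj : Disjoint V W) (hunion : V ∪ W = Finset.univ)
    (hW : W.card = d)
    (H : Finset (Finset Vt))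
    (hgood : ∀ v : Vt,
      ((((((Finset.univ : Finset (Finset Vt)).filter fun e =>
          e.card = 3 ∧ ((e ∩ W).card = 1 ∨ (e ∩ W).card = 2)) \ H).filter
          fun e => v ∈ e).card : ℝ) ≤ α * (n : ℝ)^2)) :
    ∃ M ⊆ H, (M : Set (Finset Vt)).PairwiseDisjoint id ∧ M.card = d := by
  rcases Nat.eq_zero_or_pos d with rfl | hd
  · exact ⟨∅, empty_subset H, by simp, rfl⟩
  have hV : 2 * d ≤ #V := by
    have : #V + d = n := by rw [← hW, ← card_union_of_disjoint hdisj, hunion, card_univ, hcard]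
    have : 3 * d ≤ n := by exact_mod_cast (by linarith : (3 * d : ℝ) ≤ n)
    omega
  have hAd : α * n ^ 2 ≤ 9 * d ^ 2 / 400 := by
    have : (n : ℝ) ^ 2 ≤ (150 * d) ^ 2 := pow_le_pow_left₀ (by positivity) (by linarith) 2
    nlinarith [mul_le_mul_of_nonneg_right hα1.le (sq_nonneg (n : ℝ))]
  have hmiss : ∀ v, (#(missingAt W H v) : ℝ) ≤ α * n ^ 2 := hgood
  obtain ⟨C, hC, hCcard, hCforb⟩ := exists_isPairMatching_four_mul_card_inter_lt hd hV hW.le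
    (fun x hx => badDegree_le_floor hdisj hmiss (d / 4) hx)
    (fun w hw => (Nat.cast_le.2 (card_forbiddenPairs_le hdisj hw)).trans (hmiss w))
    (floor_div_mul_le (by positivity) d) hAd
  rw [← hW]
  refine exists_matching_of_pairs hdisj (fun p hp => (hC.1 p hp).1) hC.2 (by omega) (d / 4)
    (fun w hw => ?_) fun p hp => (hC.1 p hp).2.2
  have := card_le_card_filter_add_card_inter_forbiddenPairs (H := H)
    (fun p hp => ⟨(hC.1 p hp).1, (hC.1 p hp).2.1⟩) w
  have := hCforb w hw
  omega
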